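/- arXiv:2509.21255 — 8 statements merged into one kernel-verified Lean document; each statement's English description precedes it below -/
import Mathlib

section
/- Let Γ be a simple graph on a finite vertex type V and let r be an acyclic orientation of Γ. Then the region Conf^r := {x : V → ℝ | x w < x v whenever r v w} is a nonempty, open, convex subset of the product space ℝ^V, and it is contained in the graphical configuration space Conf_Γ(ℝ). -/
/-- The graphical configuration space `Conf_Γ(X)`: functions `x : V → X` such that
adjacent vertices of `Γ` are sent to distinct points, with the subspace topology
inherited from the product space `X^V`. -/
abbrev GraphConf {V : Type*} (Γ : SimpleGraph V) (X : Type*) [TopologicalSpace X] : Type _ :=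
  {x : V → X // ∀ v w : V, Γ.Adj v w → x v ≠ x w}

/-- An acyclic orientation of a simple graph `Γ`: a relation `r` supported on the edges
of `Γ`, choosing exactly one direction for every edge, with no directed cycles
(the transitive closure is irreflexive). -/
def IsAcyclicOrientation {V : Type*} (Γ : SimpleGraph V) (r : V → V → Prop) : Prop :=
  (∀ v w, r v w → Γ.Adj v w) ∧
  (∀ v w, Γ.Adj v w → Xor' (r v w) (r w v)) ∧
  (∀ v, ¬ Relation.TransGen r v v)

/-- For an acyclic orientation `r` of a finite simple graph `Γ`, the region
`Conf^r = {x : V → ℝ | x w < x v whenever r v w}` is nonempty, open, convex, and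
contained in the graphical configuration space `Conf_Γ(ℝ)`. -/
theorem region_of_acyclic_orientation_nonempty_open_convex_subset
    {V : Type*} [Fintype V] (Γ : SimpleGraph V) (r : V → V → Prop)
    (hr : IsAcyclicOrientation Γ r) :
    ({x : V → ℝ | ∀ v w, r v w → x w < x v}).Nonempty ∧
    IsOpen {x : V → ℝ | ∀ v w, r v w → x w < x v} ∧
    Convex ℝ {x : V → ℝ | ∀ v w, r v w → x w < x v} ∧
    {x : V → ℝ | ∀ v w, r v w → x w < x v} ⊆
      {x : V → ℝ | ∀ v w, Γ.Adj v w → x v ≠ x w} := by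

  obtain ⟨hsupp, hxor, hacyc⟩ := hr
  classical
  refine ⟨?_, ?_, ?_, ?_⟩
  · refine ⟨fun v => ((Finset.univ.filter (fun u => Relation.TransGen r v u)).card : ℝ), ?_⟩
    intro v w hvw
    have hsub : Finset.univ.filter (fun u => Relation.TransGen r w u) ⊂
        Finset.univ.filter (fun u => Relation.TransGen r v u) := by
      constructor
      · intro u hu
        simp only [Finset.mem_filter, Finset.mem_univ, true_and] at hu ⊢
        exact Relation.TransGen.head hvw hu
      · intro h
        have hw : w ∈ Finset.univ.filter (fun u => Relation.TransGen r v u) := by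
          simp only [Finset.mem_filter, Finset.mem_univ, true_and]
          exact Relation.TransGen.single hvw
        have := h hw
        simp only [Finset.mem_filter, Finset.mem_univ, true_and] at this
        exact hacyc w this
    simp only []
    exact_mod_cast Finset.card_lt_card hsub
  · have heq : {x : V → ℝ | ∀ v w, r v w → x w < x v} =
        ⋂ v, ⋂ w, {x : V → ℝ | r v w → x w < x v} := by
      ext x; simp [Set.mem_iInter]
    rw [heq]
    refine isOpen_iInter_of_finite fun v => isOpen_iInter_of_finite fun w => ?_
    by_cases h : r v w
    · have : {x : V → ℝ | r v w → x w < x v} = {x : V → ℝ | x w < x v} := by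
        ext x; simp [h]
      rw [this]
      exact isOpen_lt (continuous_apply w) (continuous_apply v)
    · have : {x : V → ℝ | r v w → x w < x v} = Set.univ := by
        ext x; simp [h]
      rw [this]; exact isOpen_univ
  · intro x hx y hy a b ha hb hab
    intro v w hvw
    have hx' := hx v w hvw
    have hy' := hy v w hvw
    simp only [Pi.add_apply, Pi.smul_apply, smul_eq_mul]
    rcases eq_or_lt_of_le ha with h0 | h0
    · have hb1 : b = 1 := by linarith
      simp [← h0, hb1, hy']
    · rcases eq_or_lt_of_le hb with h1 | h1
      · have ha1 : a = 1 := by linarith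
        simp [← h1, ha1, hx']
      · exact add_lt_add (by nlinarith) (by nlinarith)
  · intro x hx v w hadj
    rcases (hxor v w hadj) with ⟨h, _⟩ | ⟨h, _⟩
    · exact (hx v w h).ne'
    · exact (hx w v h).ne
end

section
/- Let Γ be a simple graph on a finite vertex type V. For each x ∈ Conf_Γ(ℝ) define the relation o(x) by o(x) v w :↔ (Γ.Adj v w ∧ x w < x v). Then: (i) o(x) is an acyclic orientation of Γ; (ii) for x, y ∈ Conf_Γ(ℝ), o(x) = o(y) if and only if x and y lie in the same connected component of Conf_Γ(ℝ); (iii) every acyclic orientation of Γ equals o(x) for some x ∈ Conf_Γ(ℝ). In particular, the connected components of Conf_Γ(ℝ) are in bijection with the acyclic orientations of Γ. -/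
/-- The orientation associated to a real configuration `x ∈ Conf_Γ(ℝ)`:
`o(x) v w` holds iff `v` and `w` are adjacent and `x w < x v`. -/
def orientationOf {V : Type*} (Γ : SimpleGraph V) (x : GraphConf Γ ℝ) : V → V → Prop :=
  fun v w => Γ.Adj v w ∧ x.1 w < x.1 v

private lemma segment_lt {a b c d t : ℝ} (h0 : 0 ≤ t) (h1 : t ≤ 1)
    (hab : a < b) (hcd : c < d) : (1 - t) * a + t * c < (1 - t) * b + t * d := by
  rcases eq_or_lt_of_le h0 with rfl | ht
  · simpa
  · have h2 : (1 - t) * a ≤ (1 - t) * b :=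
      mul_le_mul_of_nonneg_left hab.le (by linarith)
    have h3 : t * c < t * d := mul_lt_mul_of_pos_left hcd ht
    linarith

/-- (i) `o(x)` is an acyclic orientation of `Γ`; (ii) `o(x) = o(y)` iff `x` and `y` lie in
the same connected component of `Conf_Γ(ℝ)`; (iii) every acyclic orientation of `Γ` is of the
form `o(x)`. Hence connected components of `Conf_Γ(ℝ)` biject with acyclic orientations. -/
theorem components_of_real_graph_configuration_space
    {V : Type*} [Fintype V] (Γ : SimpleGraph V) :
    (∀ x : GraphConf Γ ℝ, IsAcyclicOrientation Γ (orientationOf Γ x)) ∧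
    (∀ x y : GraphConf Γ ℝ,
      orientationOf Γ x = orientationOf Γ y ↔
        connectedComponent x = connectedComponent y) ∧
    (∀ r : V → V → Prop, IsAcyclicOrientation Γ r →
      ∃ x : GraphConf Γ ℝ, r = orientationOf Γ x) := by
  classical
  refine ⟨?_, ?_, ?_⟩
  · -- (i)
    intro x
    refine ⟨fun v w h => h.1, fun v w h => ?_, fun v h => ?_⟩
    · rcases lt_trichotomy (x.1 v) (x.1 w) with hlt | heq | hgt
      · exact Or.inr ⟨⟨h.symm, hlt⟩, fun h' => absurd h'.2 (not_lt.2 hlt.le)⟩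
      · exact absurd heq (x.2 v w h)
      · exact Or.inl ⟨⟨h, hgt⟩, fun h' => absurd h'.2 (not_lt.2 hgt.le)⟩
    · have key : ∀ a b, Relation.TransGen (orientationOf Γ x) a b → x.1 b < x.1 a := by
        intro a b hab
        induction hab with
        | single h => exact h.2
        | tail _ h ih => exact lt_trans h.2 ih
      exact absurd (key v v h) (lt_irrefl _)
  · -- (ii)
    intro x y
    constructor
    · intro h
      -- straight-line path
      have hmem : ∀ t : ℝ, t ∈ Set.Icc (0:ℝ) 1 →
          ∀ v w, Γ.Adj v w → (1 - t) * x.1 v + t * y.1 v ≠ (1 - t) * x.1 w + t * y.1 w := by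
        intro t ht v w hadj
        have heq : orientationOf Γ x v w = orientationOf Γ y v w :=
          congrFun (congrFun h v) w
        have heq' : orientationOf Γ x w v = orientationOf Γ y w v :=
          congrFun (congrFun h w) v
        have hiff : x.1 w < x.1 v ↔ y.1 w < y.1 v :=
          ⟨fun hx => (Eq.mp heq ⟨hadj, hx⟩).2, fun hy => (Eq.mpr heq ⟨hadj, hy⟩).2⟩
        rcases lt_trichotomy (x.1 v) (x.1 w) with hlt | heq | hgt
        · have hy : y.1 v < y.1 w := (Eq.mp heq' ⟨hadj.symm, hlt⟩).2
          exact ne_of_lt (segment_lt ht.1 ht.2 hlt hy)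
        · exact absurd heq (x.2 v w hadj)
        · exact ne_of_gt (segment_lt ht.1 ht.2 hgt (hiff.1 hgt))
      set g : Set.Icc (0:ℝ) 1 → GraphConf Γ ℝ := fun t =>
        ⟨fun v => (1 - t.1) * x.1 v + t.1 * y.1 v, fun v w hadj => hmem t.1 t.2 v w hadj⟩ with hg
      have hcont : Continuous g := by
        apply Continuous.subtype_mk
        apply continuous_pi
        intro v
        fun_prop
      haveI : PreconnectedSpace (Set.Icc (0:ℝ) 1) :=
        Subtype.preconnectedSpace isPreconnected_Icc
      have hconn : IsPreconnected (Set.range g) := isPreconnected_range hcont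
      have hxmem : x ∈ Set.range g := by
        refine ⟨⟨0, by norm_num⟩, ?_⟩
        ext v
        simp [hg]
      have hymem : y ∈ Set.range g := by
        refine ⟨⟨1, by norm_num⟩, ?_⟩
        ext v
        simp [hg]
      have := hconn.subset_connectedComponent hxmem
      exact connectedComponent_eq (this hymem)
    · intro h
      funext v w
      apply propext
      by_cases hadj : Γ.Adj v w
      · have hclopen : IsClopen {z : GraphConf Γ ℝ | z.1 w < z.1 v} := by
          constructor
          · rw [← isOpen_compl_iff]
            have : {z : GraphConf Γ ℝ | z.1 w < z.1 v}ᶜ = {z : GraphConf Γ ℝ | z.1 v < z.1 w} := by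
              ext z
              simp only [Set.mem_compl_iff, Set.mem_setOf_eq, not_lt]
              constructor
              · intro hle
                exact lt_of_le_of_ne hle (z.2 v w hadj)
              · exact le_of_lt
            rw [this]
            exact isOpen_lt ((continuous_apply v).comp continuous_subtype_val)
              ((continuous_apply w).comp continuous_subtype_val)
          · exact isOpen_lt ((continuous_apply w).comp continuous_subtype_val)
              ((continuous_apply v).comp continuous_subtype_val)
        constructor
        · rintro ⟨-, hx⟩
          refine ⟨hadj, ?_⟩
          have := hclopen.connectedComponent_subset hx
          rw [h] at this
          exact this mem_connectedComponent
        · rintro ⟨-, hy⟩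
          refine ⟨hadj, ?_⟩
          have := hclopen.connectedComponent_subset hy
          rw [← h] at this
          exact this mem_connectedComponent
      · constructor
        · rintro ⟨h', -⟩; exact absurd h' hadj
        · rintro ⟨h', -⟩; exact absurd h' hadj
  · -- (iii)
    rintro r ⟨h1, h2, h3⟩
    set f : V → ℝ := fun v => ((Finset.univ.filter (fun u => Relation.TransGen r v u)).card : ℝ)
      with hf
    have key : ∀ v w, r v w → f w < f v := by
      intro v w hvw
      have hsub : Finset.univ.filter (fun u => Relation.TransGen r w u) ⊂
          Finset.univ.filter (fun u => Relation.TransGen r v u) := by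
        constructor
        · intro u hu
          simp only [Finset.mem_filter, Finset.mem_univ, true_and] at hu ⊢
          exact Relation.TransGen.head hvw hu
        · intro hsup
          have hw : w ∈ Finset.univ.filter (fun u => Relation.TransGen r v u) := by
            simp only [Finset.mem_filter, Finset.mem_univ, true_and]
            exact Relation.TransGen.single hvw
          have := hsup hw
          simp only [Finset.mem_filter, Finset.mem_univ, true_and] at this
          exact h3 w this
      have := Finset.card_lt_card hsub
      simp only [hf]
      exact_mod_cast this
    have hx : ∀ v w, Γ.Adj v w → f v ≠ f w := by
      intro v w hadj
      rcases h2 v w hadj with ⟨hvw, -⟩ | ⟨hwv, -⟩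
      · exact ne_of_gt (key v w hvw)
      · exact ne_of_lt (key w v hwv)
    refine ⟨⟨f, hx⟩, ?_⟩
    funext v w
    apply propext
    constructor
    · intro hvw
      exact ⟨h1 v w hvw, key v w hvw⟩
    · rintro ⟨hadj, hlt⟩
      rcases h2 v w hadj with ⟨hvw, -⟩ | ⟨hwv, -⟩
      · exact hvw
      · exact absurd hlt (not_lt.2 (key w v hwv).le)
end

section
/- Let Γ be a simple graph on a finite vertex type V, let ⊤ denote the complete graph on V, and let ι : Conf_⊤(ℂ) → Conf_Γ(ℂ) be the (continuous) inclusion of configuration spaces. Then ι induces a surjection on fundamental groups: for every basepoint x ∈ Conf_⊤(ℂ) and every loop γ in Conf_Γ(ℂ) based at ι(x), there exists a loop γ' in Conf_⊤(ℂ) based at x such that the image loop ι ∘ γ' is path-homotopic to γ in Conf_Γ(ℂ). -/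
/-- The inclusion of the ordinary configuration space `Conf_⊤(X)` (for the complete graph)
into the graphical configuration space `Conf_Γ(X)`. -/
def confInclusion {V : Type*} (Γ : SimpleGraph V) (X : Type*) [TopologicalSpace X] :
    GraphConf (⊤ : SimpleGraph V) X → GraphConf Γ X :=
  fun x => ⟨x.1, fun v w h => x.2 v w (by simpa using h.ne)⟩

theorem confInclusion_continuous {V : Type*} (Γ : SimpleGraph V)
    (X : Type*) [TopologicalSpace X] : Continuous (confInclusion Γ X) := by
  apply Continuous.subtype_mk
  exact continuous_subtype_val

/-!
`Conf_Γ(ℂ)` is an open subset `U` of `ℂ^V`, and `Conf_⊤(ℂ)` is `U` with the finitely many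
complex hyperplanes `y v = y w` removed; these have real codimension two, so a loop can be pushed
off them. Approximate the loop by a `C¹` loop `g` with the same base point, and add
`s (1 - s) z c` for an injective `c : V → ℂ`. The `z` for which this meets `y v = y w` at some time
`s ∈ (0, 1)` form the `C¹` image of an interval, a set of Hausdorff dimension at most `1`, so a
small good `z` exists. The perturbed loop stays in a thickening of the original one inside `U`,
where the straight-line homotopy connects the two.
-/

open Set Function Metric unitInterval

theorem isOpen_setOf_adj_ne {V X : Type*} [Finite V] [TopologicalSpace X] [T2Space X]
    (Γ : SimpleGraph V) : IsOpen {x : V → X | ∀ v w, Γ.Adj v w → x v ≠ x w} := by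
  simp only [ofPred_forall]
  exact isOpen_iInter_of_finite fun v => isOpen_iInter_of_finite fun w =>
    isOpen_iInter_of_finite fun _ => isOpen_ne_fun (continuous_apply v) (continuous_apply w)

theorem top_adj_ne_iff_injective {V X : Type*} {x : V → X} :
    (∀ v w, (⊤ : SimpleGraph V).Adj v w → x v ≠ x w) ↔ Injective x :=
  ⟨fun h v w e => by_contra fun hne => h v w hne e, fun h _ _ hne e => hne (h e)⟩

theorem Path.Homotopic.of_segment_subset {E : Type*} [AddCommGroup E] [TopologicalSpace E]
    [IsTopologicalAddGroup E] [Module ℝ E] [ContinuousSMul ℝ E] {U : Set E} {a b : U}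
    {p q : Path a b} (h : ∀ s, segment ℝ (p s : E) (q s) ⊆ U) : p.Homotopic q :=
  ⟨{ toFun x := ⟨Path.segment (p x.2 : E) (q x.2) x.1,
        h x.2 <| Path.range_segment (p x.2 : E) (q x.2) ▸ mem_range_self x.1⟩
     continuous_toFun := by
       refine Continuous.subtype_mk ?_ _
       simp only [Path.segment_apply, AffineMap.lineMap_apply]
       fun_prop
     map_zero_left := by simp
     map_one_left := by simp
     prop' t s hs := by rcases hs with rfl | rfl <;> simp }⟩

theorem dense_setOf_injective_add_smul {V : Type*} [Fintype V] {S : Set ℝ} (hS : Convex ℝ S)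
    {g : ℝ → V → ℂ} (hg : ContDiffOn ℝ 1 g S) {c : V → ℂ} (hc : Injective c) :
    Dense {z : ℂ | ∀ s ∈ S, Injective (g s + z • c)} := by
  set Z := ⋃ p : V × V, (fun s => (g s p.2 - g s p.1) / (c p.1 - c p.2)) '' S
  have hZ : dimH Z < Module.finrank ℝ ℂ := by
    rw [Complex.finrank_real_complex, dimH_iUnion]
    refine lt_of_le_of_lt ?_ (by norm_num : (1 : ENNReal) < (2 : ℕ))
    refine iSup_le fun p => ?_
    have hgp : ContDiffOn ℝ 1 (fun s => (g s p.2 - g s p.1) / (c p.1 - c p.2)) S :=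
      ((contDiffOn_pi.1 hg p.2).sub (contDiffOn_pi.1 hg p.1)).div_const _
    calc dimH _ ≤ dimH S := hgp.dimH_image_le hS Subset.rfl
      _ ≤ dimH (univ : Set ℝ) := dimH_mono (subset_univ _)
      _ = 1 := Real.dimH_univ
  refine (dense_compl_of_dimH_lt_finrank hZ).mono fun z hz s hs v w hvw => by_contra fun hne => ?_
  simp only [Pi.add_apply, Pi.smul_apply, smul_eq_mul] at hvw
  refine hz (mem_iUnion.2 ⟨(v, w), s, hs, ?_⟩)
  rw [div_eq_iff (sub_ne_zero.2 (hc.ne hne))]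
  linear_combination -hvw

theorem Polynomial.contDiff_eval (p : Polynomial ℝ) {n : WithTop ℕ∞} :
    ContDiff ℝ n fun s => p.eval s := by
  simpa only [Polynomial.coe_aeval_eq_eval] using p.contDiff_aeval (𝕜 := ℝ) n

theorem Complex.exists_contDiff_dist_lt_of_continuousOn {f : ℝ → ℂ} {a b : ℝ}
    (hf : ContinuousOn f (Icc a b)) {ε : ℝ} (hε : 0 < ε) :
    ∃ g : ℝ → ℂ, ContDiff ℝ 1 g ∧ ∀ s ∈ Icc a b, dist (g s) (f s) < ε := by
  obtain ⟨p, hp⟩ := exists_polynomial_near_of_continuousOn a b (fun s => (f s).re)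
    (continuous_re.comp_continuousOn hf) (ε / 2) (half_pos hε)
  obtain ⟨q, hq⟩ := exists_polynomial_near_of_continuousOn a b (fun s => (f s).im)
    (continuous_im.comp_continuousOn hf) (ε / 2) (half_pos hε)
  refine ⟨fun s => p.eval s + q.eval s * Complex.I, ?_, fun s hs => ?_⟩
  · exact (ofRealCLM.contDiff.comp p.contDiff_eval).add
      ((ofRealCLM.contDiff.comp q.contDiff_eval).mul contDiff_const)
  · calc dist _ (f s) ≤ |p.eval s - (f s).re| + |q.eval s - (f s).im| := by
          simpa [dist_eq_norm] using
            norm_le_abs_re_add_abs_im (p.eval s + q.eval s * Complex.I - f s)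
      _ < ε / 2 + ε / 2 := add_lt_add (hp s hs) (hq s hs)
      _ = ε := add_halves ε

theorem exists_contDiff_pi_dist_lt_of_continuousOn {V : Type*} [Fintype V] {f : ℝ → V → ℂ}
    {a b : ℝ} (hf : ContinuousOn f (Icc a b)) {ε : ℝ} (hε : 0 < ε) :
    ∃ g : ℝ → V → ℂ, ContDiff ℝ 1 g ∧ ∀ s ∈ Icc a b, dist (g s) (f s) < ε := by
  choose g hg hgf using fun v =>
    Complex.exists_contDiff_dist_lt_of_continuousOn (continuousOn_pi.1 hf v) hε
  exact ⟨fun s v => g v s, contDiff_pi.2 hg, fun s hs => (dist_pi_lt_iff hε).2 fun v => hgf v s hs⟩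

theorem Path.exists_contDiff_endpoints_dist_lt {E : Type*} [NormedAddCommGroup E]
    [NormedSpace ℝ E] {a b : E} (f : Path a b) {g : ℝ → E} (hg : ContDiff ℝ 1 g) {ε : ℝ}
    (hgf : ∀ s : I, dist (g s) (f s) < ε) :
    ∃ g' : ℝ → E, ContDiff ℝ 1 g' ∧ g' 0 = a ∧ g' 1 = b ∧ ∀ s : I, dist (g' s) (f s) < 2 * ε := by
  have ha : ‖a - g 0‖ < ε := by simpa [dist_eq_norm'] using hgf 0
  have hb : ‖b - g 1‖ < ε := by simpa [dist_eq_norm'] using hgf 1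
  refine ⟨fun s => g s + (1 - s) • (a - g 0) + s • (b - g 1), by fun_prop, by simp, by simp,
    fun s => ?_⟩
  have hs₀ : (0 : ℝ) ≤ s := s.2.1
  have hs₁ : (s : ℝ) ≤ 1 := s.2.2
  calc dist (g s + (1 - (s : ℝ)) • (a - g 0) + (s : ℝ) • (b - g 1)) (f s)
      ≤ dist (g s) (f s) + (1 - s) * ‖a - g 0‖ + s * ‖b - g 1‖ := by
        rw [dist_eq_norm, dist_eq_norm, add_sub_right_comm, add_sub_right_comm]
        refine (norm_add₃_le ..).trans ?_
        rw [norm_smul, norm_smul, Real.norm_of_nonneg (by linarith), Real.norm_of_nonneg hs₀]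
    _ < ε + (1 - s) * ε + s * ε := add_lt_add_of_lt_of_le
        (add_lt_add_of_lt_of_le (hgf s) (mul_le_mul_of_nonneg_left ha.le (by linarith)))
        (mul_le_mul_of_nonneg_left hb.le hs₀)
    _ = 2 * ε := by ring

theorem Path.exists_contDiff_dist_lt {V : Type*} [Fintype V] {a b : V → ℂ} (f : Path a b)
    {ε : ℝ} (hε : 0 < ε) :
    ∃ g : ℝ → V → ℂ, ContDiff ℝ 1 g ∧ g 0 = a ∧ g 1 = b ∧ ∀ s : I, dist (g s) (f s) < ε := by
  obtain ⟨g, hg, hgf⟩ :=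
    exists_contDiff_pi_dist_lt_of_continuousOn f.continuous_extend.continuousOn (half_pos hε)
  rw [← mul_div_cancel₀ ε two_ne_zero]
  exact f.exists_contDiff_endpoints_dist_lt hg fun s => f.extend_extends' s ▸ hgf s s.2

theorem Path.exists_injective_dist_lt {V : Type*} [Fintype V] {a b : V → ℂ} (ha : Injective a)
    (hb : Injective b) (f : Path a b) {ε : ℝ} (hε : 0 < ε) :
    ∃ f' : Path a b, ∀ s, Injective (f' s) ∧ dist (f' s) (f s) < ε := by
  obtain ⟨g, hg, hg₀, hg₁, hgf⟩ := f.exists_contDiff_dist_lt (half_pos hε)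
  let c : V → ℂ := fun v => (Fintype.equivFin V v : ℕ)
  have hc : Injective c :=
    Nat.cast_injective.comp (Fin.val_injective.comp (Fintype.equivFin V).injective)
  let bump : ℝ → ℝ := fun s => s * (1 - s)
  have hbump : ∀ s ∈ Ioo (0 : ℝ) 1, bump s ≠ 0 := fun s hs =>
    mul_ne_zero hs.1.ne' (sub_ne_zero.2 hs.2.ne')
  have hg' : ContDiffOn ℝ 1 (fun s => (bump s)⁻¹ • g s) (Ioo 0 1) :=
    ((by fun_prop : ContDiff ℝ 1 bump).contDiffOn.inv hbump).smul hg.contDiffOn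
  -- Off the endpoints, `g s + bump s • z • c` is a nonzero multiple of `(bump s)⁻¹ • g s + z • c`.
  have hdense := dense_setOf_injective_add_smul (convex_Ioo 0 1) hg' hc
  obtain ⟨z, hz, hzc⟩ := hdense.exists_mem_open (isOpen_lt (by fun_prop) continuous_const)
    (⟨0, by simpa using half_pos hε⟩ : {z : ℂ | ‖z • c‖ < ε / 2}.Nonempty)
  let F : ℝ → V → ℂ := fun s => g s + bump s • z • c
  refine ⟨⟨⟨fun s => F s, by fun_prop⟩, by simp [F, bump, hg₀], by simp [F, bump, hg₁]⟩,
    fun s => ⟨?_, ?_⟩⟩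
  · rcases eq_endpoints_or_mem_Ioo_of_mem_Icc s.2 with hs | hs | hs
    · simpa [F, bump, hs, hg₀] using ha
    · simpa [F, bump, hs, hg₁] using hb
    · have hF : F s = bump s • ((bump s)⁻¹ • g s + z • c) := by
        rw [smul_add, smul_inv_smul₀ (hbump s hs)]
      change Injective (F s)
      rw [hF]
      exact (smul_right_injective ℂ (hbump s hs)).comp (hz s hs)
  · have hbump_le : |bump s| ≤ 1 := by
      obtain ⟨hs₀, hs₁⟩ := s.2
      exact abs_le.2 ⟨by nlinarith, by nlinarith⟩
    calc dist (F s) (f s) ≤ dist (g s) (f s) + |bump s| * ‖z • c‖ := by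
          rw [dist_eq_norm, dist_eq_norm, add_sub_right_comm, ← Real.norm_eq_abs, ← norm_smul]
          exact norm_add_le _ _
      _ < ε / 2 + ε / 2 := add_lt_add_of_lt_of_le (hgf s) <|
          (mul_le_of_le_one_left (norm_nonneg _) hbump_le).trans hzc.le
      _ = ε := add_halves ε

/-- The inclusion `ι : Conf_⊤(ℂ) → Conf_Γ(ℂ)` induces a surjection on fundamental groups:
every loop in `Conf_Γ(ℂ)` based at `ι(x)` is path-homotopic to the image of a loop in
`Conf_⊤(ℂ)` based at `x`. -/
theorem confInclusion_pi1_surjective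
    {V : Type*} [Fintype V] (Γ : SimpleGraph V)
    (x : GraphConf (⊤ : SimpleGraph V) ℂ)
    (γ : Path (confInclusion Γ ℂ x) (confInclusion Γ ℂ x)) :
    ∃ γ' : Path x x,
      (γ'.map (confInclusion_continuous Γ ℂ)).Homotopic γ := by
  let f : Path x.1 x.1 := γ.map continuous_subtype_val
  obtain ⟨ε, hε, hεU⟩ := (isCompact_range f.continuous).exists_thickening_subset_open
    (isOpen_setOf_adj_ne Γ) (range_subset_iff.2 fun s => (γ s).2)
  have hx : Injective x.1 := top_adj_ne_iff_injective.1 x.2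
  obtain ⟨f', hf'⟩ := f.exists_injective_dist_lt hx hx hε
  let γ' : Path x x :=
    { toFun s := ⟨f' s, top_adj_ne_iff_injective.2 (hf' s).1⟩
      continuous_toFun := f'.continuous.subtype_mk _
      source' := Subtype.ext f'.source
      target' := Subtype.ext f'.target }
  refine ⟨γ', Path.Homotopic.of_segment_subset fun s => ?_⟩
  calc segment ℝ (f' s) (f s) ⊆ ball (f s) ε :=
        (convex_ball _ _).segment_subset (mem_ball.2 (hf' s).2) (mem_ball_self hε)
    _ ⊆ thickening ε (range f) := ball_subset_thickening (mem_range_self s) ε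
    _ ⊆ _ := hεU
end

section
/- Let n ≥ 1 and d ≥ 1. Let P_n be the path graph on n vertices (vertices 1,…,n with edges {i, i+1}), and let S^d denote the unit sphere in Euclidean space ℝ^{d+1}. Then the graphical configuration space Conf_{P_n}(S^d) is homotopy equivalent to S^d. -/
/-!
Forgetting the last point `x n` is a homotopy equivalence `Conf_{P_n}(S^d) → Conf_{P_{n-1}}(S^d)`
for `n ≥ 2`. Its homotopy inverse appends the antipode `-x (n-1)`, and pushing `x n` along the
great-circle arc from `-x (n-1)` to `x n`, which never meets `x (n-1)`, deforms the identity into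
the composite. By induction `Conf_{P_n}(S^d) ≃ₕ Conf_{P_1}(S^d) = S^d`. The argument only uses
that every punctured space `X ∖ {b}` contracts, continuously in `b`, onto a point other than `b`.
-/

open SimpleGraph ContinuousMap unitInterval Metric

namespace SimpleGraph

variable {m : ℕ}

theorem pathGraph_adj_castSucc {i j : Fin (m + 1)} :
    (pathGraph (m + 2)).Adj i.castSucc j.castSucc ↔ (pathGraph (m + 1)).Adj i j := by
  simp [pathGraph_adj]

theorem pathGraph_adj_last_castSucc {j : Fin (m + 1)} :
    (pathGraph (m + 2)).Adj (Fin.last (m + 1)) j.castSucc ↔ j = Fin.last m := by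
  simp only [pathGraph_adj, Fin.ext_iff, Fin.val_last, Fin.val_castSucc]
  omega

end SimpleGraph

/-- For every `b`, a contraction of `X ∖ {b}` onto the point `center b ≠ b`, depending
continuously on `b`; a point of `X ∖ {b}` is encoded as a pair `(a, b)` with `a ≠ b`. -/
structure PuncturedContraction (X : Type*) [TopologicalSpace X] where
  center : C(X, X)
  center_ne (b : X) : center b ≠ b
  homotopy : C(I × {p : X × X // p.1 ≠ p.2}, X)
  homotopy_zero (p : {p : X × X // p.1 ≠ p.2}) : homotopy (0, p) = center p.1.2
  homotopy_one (p : {p : X × X // p.1 ≠ p.2}) : homotopy (1, p) = p.1.1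
  homotopy_ne (t : I) (p : {p : X × X // p.1 ≠ p.2}) : homotopy (t, p) ≠ p.1.2

namespace GraphConf

variable {X : Type*} {m : ℕ}

theorem snoc_ne_of_adj {x : Fin (m + 1) → X}
    (hx : ∀ v w, (pathGraph (m + 1)).Adj v w → x v ≠ x w) {y : X} (hy : y ≠ x (Fin.last m)) :
    ∀ v w, (pathGraph (m + 2)).Adj v w →
      Fin.snoc (α := fun _ => X) x y v ≠ Fin.snoc (α := fun _ => X) x y w := by
  intro v w hvw
  induction v using Fin.lastCases <;> induction w using Fin.lastCases
  · exact absurd hvw (SimpleGraph.irrefl _)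
  · rw [pathGraph_adj_last_castSucc] at hvw
    subst hvw
    simpa using hy
  · rw [adj_comm, pathGraph_adj_last_castSucc] at hvw
    subst hvw
    simpa using hy.symm
  · simpa using hx _ _ (pathGraph_adj_castSucc.1 hvw)

variable [TopologicalSpace X]

def homeomorphOfUnique {V : Type*} [Unique V] (Γ : SimpleGraph V) : GraphConf Γ X ≃ₜ X where
  toFun x := x.1 default
  invFun p := ⟨fun _ => p, fun v w h => absurd (Subsingleton.elim v w ▸ h) (Γ.irrefl)⟩
  left_inv x := Subtype.ext (funext fun v => by rw [Subsingleton.elim v default])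
  right_inv _ := rfl
  continuous_toFun := (continuous_apply _).comp continuous_subtype_val
  continuous_invFun := by fun_prop

def pathInit : C(GraphConf (pathGraph (m + 2)) X, GraphConf (pathGraph (m + 1)) X) where
  toFun x := ⟨Fin.init x.1, fun _ _ h => x.2 _ _ (pathGraph_adj_castSucc.2 h)⟩
  continuous_toFun := continuous_subtype_val.finInit.subtype_mk _

def pathSnoc (x : GraphConf (pathGraph (m + 1)) X) (y : X) (hy : y ≠ x.1 (Fin.last m)) :
    GraphConf (pathGraph (m + 2)) X :=
  ⟨Fin.snoc x.1 y, snoc_ne_of_adj x.2 hy⟩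

theorem continuous_pathSnoc {Y : Type*} [TopologicalSpace Y]
    {x : Y → GraphConf (pathGraph (m + 1)) X} {y : Y → X} (hx : Continuous x) (hy : Continuous y)
    (hxy : ∀ z, y z ≠ (x z).1 (Fin.last m)) :
    Continuous fun z => pathSnoc (x z) (y z) (hxy z) :=
  (hx.subtype_val.finSnoc hy).subtype_mk _

def lastEdge (x : GraphConf (pathGraph (m + 2)) X) : {p : X × X // p.1 ≠ p.2} :=
  ⟨(x.1 (Fin.last (m + 1)), (pathInit x).1 (Fin.last m)),
    x.2 _ _ (pathGraph_adj_last_castSucc.2 rfl)⟩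

theorem continuous_lastEdge : Continuous (lastEdge : GraphConf (pathGraph (m + 2)) X → _) :=
  (((continuous_apply _).comp continuous_subtype_val).prodMk
    ((continuous_apply _).comp continuous_subtype_val)).subtype_mk _

def pathInitHomotopyEquiv (P : PuncturedContraction X) :
    GraphConf (pathGraph (m + 2)) X ≃ₕ GraphConf (pathGraph (m + 1)) X where
  toFun := pathInit
  invFun :=
    { toFun x := pathSnoc x (P.center (x.1 (Fin.last m))) (P.center_ne _)
      continuous_toFun := continuous_pathSnoc continuous_id
        ((P.center.continuous.comp (continuous_apply _)).comp continuous_subtype_val) _ }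
  left_inv := ⟨{
    toFun q := pathSnoc (pathInit q.2) (P.homotopy (q.1, lastEdge q.2))
      (P.homotopy_ne _ _)
    continuous_toFun := continuous_pathSnoc (pathInit.continuous.comp continuous_snd)
      (P.homotopy.continuous.comp
        (continuous_fst.prodMk (continuous_lastEdge.comp continuous_snd))) _
    map_zero_left x := Subtype.ext <| by simp [pathSnoc, P.homotopy_zero, lastEdge]
    map_one_left x := Subtype.ext <| by simp [pathSnoc, P.homotopy_one, lastEdge, pathInit] }⟩
  right_inv := by
    convert ContinuousMap.Homotopic.refl _
    ext x i
    simp [pathInit, pathSnoc]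

def pathGraphHomotopyEquiv (P : PuncturedContraction X) :
    (m : ℕ) → GraphConf (pathGraph (m + 1)) X ≃ₕ X
  | 0 => (homeomorphOfUnique (pathGraph 1)).toHomotopyEquiv
  | m + 1 => (pathInitHomotopyEquiv P).trans (pathGraphHomotopyEquiv P m)

end GraphConf

section Sphere

variable {E : Type*} [NormedAddCommGroup E] [NormedSpace ℝ E] {a b : E}

theorem eq_of_smul_eq_smul_of_norm_eq_one (ha : ‖a‖ = 1) (hb : ‖b‖ = 1) {s t : ℝ}
    (hs : 0 ≤ s) (ht : 0 < t) (h : s • a = t • b) : a = b := by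
  have hst : s = t := by
    simpa [norm_smul, ha, hb, abs_of_nonneg hs, abs_of_pos ht] using congrArg norm h
  subst hst
  exact smul_right_injective E ht.ne' h

theorem smul_sub_smul_ne_zero (ha : ‖a‖ = 1) (hb : ‖b‖ = 1) (hab : a ≠ b) {t : ℝ} (ht : t ∈ I) :
    t • a - (1 - t) • b ≠ 0 := by
  rcases ht.2.eq_or_lt with rfl | ht1
  · simp [← norm_ne_zero_iff, ha]
  · rw [sub_ne_zero]
    exact fun h => hab (eq_of_smul_eq_smul_of_norm_eq_one ha hb ht.1 (by linarith) h)

/-- The great-circle arc from `-b` (at `t = 0`) to `a` (at `t = 1`) that avoids `b`: the radial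
projection of the segment `[-b, a]`. -/
noncomputable def greatArc (a b : E) (t : ℝ) : E :=
  ‖t • a - (1 - t) • b‖⁻¹ • (t • a - (1 - t) • b)

theorem norm_greatArc (ha : ‖a‖ = 1) (hb : ‖b‖ = 1) (hab : a ≠ b) {t : ℝ} (ht : t ∈ I) :
    ‖greatArc a b t‖ = 1 := by
  rw [greatArc, norm_smul, norm_inv, norm_norm,
    inv_mul_cancel₀ (norm_ne_zero_iff.2 (smul_sub_smul_ne_zero ha hb hab ht))]

theorem greatArc_ne (ha : ‖a‖ = 1) (hb : ‖b‖ = 1) (hab : a ≠ b) {t : ℝ} (ht : t ∈ I) :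
    greatArc a b t ≠ b := by
  set v := t • a - (1 - t) • b with hv
  have hv0 : 0 < ‖v‖ := norm_pos_iff.2 (smul_sub_smul_ne_zero ha hb hab ht)
  intro h
  have hvb : v = ‖v‖ • b := by
    rw [← h, greatArc, ← hv, smul_smul, mul_inv_cancel₀ hv0.ne', one_smul]
  refine hab (eq_of_smul_eq_smul_of_norm_eq_one (t := ‖v‖ + (1 - t)) ha hb ht.1
    (by linarith [ht.2]) ?_)
  rw [add_smul, ← hvb, hv, sub_add_cancel]

theorem greatArc_zero (hb : ‖b‖ = 1) : greatArc a b 0 = -b := by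
  simp [greatArc, hb]

theorem greatArc_one (ha : ‖a‖ = 1) : greatArc a b 1 = a := by
  simp [greatArc, ha]

theorem Continuous.greatArc {Y : Type*} [TopologicalSpace Y] {a b : Y → E} {t : Y → ℝ}
    (ha : Continuous a) (hb : Continuous b) (ht : Continuous t)
    (h : ∀ y, t y • a y - (1 - t y) • b y ≠ 0) :
    Continuous fun y => greatArc (a y) (b y) (t y) := by
  have hv : Continuous fun y => t y • a y - (1 - t y) • b y := by fun_prop
  exact (hv.norm.inv₀ fun y => norm_ne_zero_iff.2 (h y)).smul hv

noncomputable def PuncturedContraction.unitSphere : PuncturedContraction (sphere (0 : E) 1) where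
  center := ⟨Neg.neg, continuous_neg⟩
  center_ne b := (ne_neg_of_mem_unit_sphere ℝ b).symm
  homotopy :=
    { toFun q := ⟨greatArc q.2.1.1 q.2.1.2 q.1, by
        simpa using norm_greatArc (norm_eq_of_mem_sphere q.2.1.1) (norm_eq_of_mem_sphere q.2.1.2)
          (Subtype.coe_ne_coe.2 q.2.2) q.1.2⟩
      continuous_toFun := by
        refine (Continuous.greatArc (by fun_prop) (by fun_prop) (by fun_prop) ?_).subtype_mk _
        exact fun q => smul_sub_smul_ne_zero (norm_eq_of_mem_sphere _) (norm_eq_of_mem_sphere _)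
          (Subtype.coe_ne_coe.2 q.2.2) q.1.2 }
  homotopy_zero p := Subtype.ext (greatArc_zero (norm_eq_of_mem_sphere _))
  homotopy_one p := Subtype.ext (greatArc_one (norm_eq_of_mem_sphere _))
  homotopy_ne t p := Subtype.coe_ne_coe.1 <| greatArc_ne (norm_eq_of_mem_sphere _)
    (norm_eq_of_mem_sphere _) (Subtype.coe_ne_coe.2 p.2) t.2

end Sphere

theorem pathGraph_conf_sphere_homotopyEquiv_sphere_general
    (n : ℕ) (hn : 1 ≤ n) (d : ℕ) :
    Nonempty
      (ContinuousMap.HomotopyEquiv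
        (GraphConf (SimpleGraph.pathGraph n)
          (Metric.sphere (0 : EuclideanSpace ℝ (Fin (d + 1))) 1))
        (Metric.sphere (0 : EuclideanSpace ℝ (Fin (d + 1))) 1)) := by
  obtain ⟨m, rfl⟩ := Nat.exists_eq_add_of_le' hn
  exact ⟨GraphConf.pathGraphHomotopyEquiv PuncturedContraction.unitSphere m⟩

/-- For `n ≥ 1` and `d ≥ 1`, the graphical configuration space `Conf_{P_n}(S^d)` of the
path graph `P_n` on the `d`-sphere `S^d ⊆ ℝ^{d+1}` is homotopy equivalent to `S^d`. -/
theorem pathGraph_conf_sphere_homotopyEquiv_sphere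
    (n : ℕ) (hn : 1 ≤ n) (d : ℕ) (hd : 1 ≤ d) :
    Nonempty
      (ContinuousMap.HomotopyEquiv
        (GraphConf (SimpleGraph.pathGraph n)
          (Metric.sphere (0 : EuclideanSpace ℝ (Fin (d + 1))) 1))
        (Metric.sphere (0 : EuclideanSpace ℝ (Fin (d + 1))) 1)) :=
  pathGraph_conf_sphere_homotopyEquiv_sphere_general n hn d
end

section
/- Let Γ be a simple graph on a finite vertex type V, let v ∈ V be a simplicial vertex, and let q be a natural number with deg_Γ(v) ≤ q. Then the number of proper colorings of Γ with q colors satisfies the recurrence card(Colorings of Γ with q colors) = (q − deg_Γ(v)) · card(Colorings of Γ∖v with q colors), where Γ∖v is the induced subgraph on V ∖ {v}. -/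
/-!
A proper coloring of `Γ` is the same as a proper coloring of `Γ ∖ v` together with a color for `v`
that avoids the colors of its neighbours. When `v` is simplicial its neighbours form a clique, so
they carry `deg v` pairwise distinct colors, leaving exactly `q - deg v` choices for `v` whatever
the coloring of `Γ ∖ v` is.
-/

namespace SimpleGraph

variable {V α : Type*} (G : SimpleGraph V) (v : V)

def neighborColor (c : (G.induce {w | w ≠ v}).Coloring α) (w : G.neighborSet v) : α :=
  c ⟨w, (G.ne_of_adj w.2).symm⟩

def availableColors (c : (G.induce {w | w ≠ v}).Coloring α) : Set α :=
  (Set.range (G.neighborColor v c))ᶜ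

variable {G v}

theorem neighborColor_injective (hv : G.IsClique (G.neighborSet v))
    (c : (G.induce {w | w ≠ v}).Coloring α) : Function.Injective (G.neighborColor v c) :=
  fun w u hwu ↦ Subtype.ext <| by_contra fun hne ↦ c.valid (induce_adj.2 (hv w.2 u.2 hne)) hwu

theorem ncard_availableColors [Fintype V] [DecidableRel G.Adj] [Finite α]
    (hv : G.IsClique (G.neighborSet v)) (c : (G.induce {w | w ≠ v}).Coloring α) :
    (G.availableColors v c).ncard = Nat.card α - G.degree v := by
  rw [availableColors, Set.ncard_compl, Set.ncard_range_of_injective (neighborColor_injective hv c),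
    ← card_neighborSet_eq_degree, Nat.card_eq_fintype_card (α := G.neighborSet v)]

variable (G v)

def coloringEquivSigmaAvailableColors [DecidableEq V] :
    G.Coloring α ≃ Σ c : (G.induce {w | w ≠ v}).Coloring α, G.availableColors v c where
  toFun C := ⟨C.comp (Embedding.induce _).toHom, C v, by
    rintro ⟨w, hw⟩
    exact C.valid (G.adj_symm w.2) hw⟩
  invFun p := Coloring.mk (fun w ↦ if h : w = v then p.2 else p.1 ⟨w, h⟩) <| by
    intro w u hwu
    by_cases hw : w = v <;> by_cases hu : u = v
    · exact absurd (hw ▸ hu ▸ hwu) G.irrefl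
    · subst hw
      simp only [dif_pos, dif_neg hu]
      exact fun h ↦ p.2.2 ⟨⟨u, hwu⟩, h.symm⟩
    · subst hu
      simp only [dif_pos, dif_neg hw]
      exact fun h ↦ p.2.2 ⟨⟨w, G.adj_symm hwu⟩, h⟩
    · simp only [dif_neg hw, dif_neg hu]
      exact p.1.valid (induce_adj.2 hwu)
  left_inv C := by
    ext w
    by_cases h : w = v
    · subst h; exact dif_pos rfl
    · exact dif_neg h
  right_inv p := Sigma.subtype_ext (RelHom.ext fun w ↦ dif_neg w.2) (dif_pos rfl)

end SimpleGraph

theorem card_colorings_simplicial_recurrence_general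
    {V : Type*} [Fintype V] [DecidableEq V] (Γ : SimpleGraph V) [DecidableRel Γ.Adj]
    (v : V) (hsimp : ∀ w u : V, Γ.Adj v w → Γ.Adj v u → w ≠ u → Γ.Adj w u)
    (q : ℕ) :
    Nat.card (Γ.Coloring (Fin q)) =
      (q - Γ.degree v) * Nat.card ((Γ.induce {w : V | w ≠ v}).Coloring (Fin q)) := by
  have hclique : Γ.IsClique (Γ.neighborSet v) := fun w hw u hu ↦ hsimp w u hw hu
  rw [Nat.card_congr (Γ.coloringEquivSigmaAvailableColors v), Nat.card_sigma]
  simp_rw [Nat.card_coe_set_eq, SimpleGraph.ncard_availableColors hclique, Nat.card_fin]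
  rw [Finset.sum_const, Finset.card_univ, smul_eq_mul, Nat.card_eq_fintype_card, mul_comm]

/-- For a finite simple graph `Γ` with a simplicial vertex `v` of degree at most `q`,
the number of proper `q`-colorings of `Γ` equals `(q - deg_Γ(v))` times the number of
proper `q`-colorings of the induced subgraph `Γ∖v`; this is the chromatic-polynomial
recurrence `𝔛_Γ(q) = (q − deg(v))·𝔛_{Γ∖v}(q)` at a simplicial vertex. -/
theorem card_colorings_simplicial_recurrence
    {V : Type*} [Fintype V] [DecidableEq V] (Γ : SimpleGraph V) [DecidableRel Γ.Adj]
    (v : V) (hsimp : ∀ w u : V, Γ.Adj v w → Γ.Adj v u → w ≠ u → Γ.Adj w u)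
    (q : ℕ) (hq : Γ.degree v ≤ q) :
    Nat.card (Γ.Coloring (Fin q)) =
      (q - Γ.degree v) * Nat.card ((Γ.induce {w : V | w ≠ v}).Coloring (Fin q)) :=
  card_colorings_simplicial_recurrence_general Γ v hsimp q
end

section
/- Let Γ be a simple graph on a finite vertex type V. Call a nonempty subset G ⊆ V a tube if the induced subgraph Γ|_G is connected, and for a tube G let N[G] := G ∪ {v ∈ V | ∃ w ∈ G, Γ.Adj v w} denote its closed neighborhood. Then for all tubes G ⊆ H of Γ, the integer sum over all tubes K with G ⊆ K ⊆ H and K ⊆ N[G] of (−1)^{|K| − |G|} equals 1 if G = H and equals 0 if G ≠ H. (Equivalently, the function μ_Γ(G,H) = (−1)^{|H|−|G|} for G ⊆ H ⊆ N[G] and 0 otherwise is the Möbius function of the poset of tubes of Γ ordered by inclusion.) -/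
/-- A tube of a simple graph `Γ`: a nonempty set of vertices inducing a connected
subgraph. -/
def IsTube {V : Type*} (Γ : SimpleGraph V) (G : Finset V) : Prop :=
  G.Nonempty ∧ (Γ.induce (G : Set V)).Connected

/-- The closed neighborhood `N[G] = G ∪ {v | ∃ w ∈ G, Γ.Adj v w}` of a set of vertices. -/
def closedNbhd {V : Type*} [Fintype V] [DecidableEq V]
    (Γ : SimpleGraph V) [DecidableRel Γ.Adj] (G : Finset V) : Finset V :=
  G ∪ Finset.univ.filter (fun a => ∃ w ∈ G, Γ.Adj a w)

open scoped Classical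

/-! Every `K` with `G ⊆ K ⊆ N[G]` is a tube, since each of its vertices is adjacent to the
connected set `G`. So the tubes in the sum form the whole Boolean interval `[G, H ∩ N[G]]`,
whose alternating sum vanishes unless its endpoints agree; and they agree only when `G = H`,
because a path in `H` from `G` to a vertex of `H \ G` leaves `G` through a vertex of `N[G]`. -/

namespace Finset

theorem sum_Icc_neg_one_pow_card_sub {α : Type*} [DecidableEq α] {s t : Finset α}
    (hst : s ⊆ t) :
    ∑ u ∈ Icc s t, (-1 : ℤ) ^ (#u - #s) = if s = t then 1 else 0 := by
  have hdisj : ∀ v ∈ (t \ s).powerset, Disjoint s v := fun v hv =>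
    disjoint_of_subset_right (mem_powerset.mp hv) disjoint_sdiff
  rw [Icc_eq_image_powerset hst, sum_image, sum_congr rfl fun v hv => by
      rw [card_union_of_disjoint (hdisj v hv), Nat.add_sub_cancel_left],
    sum_powerset_neg_one_pow_card]
  · exact if_congr (sdiff_eq_empty_iff_subset.trans ⟨hst.antisymm, fun h => h ▸ subset_rfl⟩)
      rfl rfl
  · intro v hv w hw hvw
    rw [← union_sdiff_cancel_left (hdisj v hv), ← union_sdiff_cancel_left (hdisj w hw)]
    exact congrArg (· \ s) hvw

end Finset

section Tubes

variable {V : Type*} [Fintype V] [DecidableEq V] (Γ : SimpleGraph V) [DecidableRel Γ.Adj]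

theorem mem_closedNbhd {G : Finset V} {v : V} :
    v ∈ closedNbhd Γ G ↔ v ∈ G ∨ ∃ w ∈ G, Γ.Adj v w := by
  simp [closedNbhd]

theorem subset_closedNbhd (G : Finset V) : G ⊆ closedNbhd Γ G :=
  Finset.subset_union_left

variable {Γ}

theorem IsTube.of_subset_closedNbhd {G K : Finset V} (hG : IsTube Γ G) (hGK : G ⊆ K)
    (hK : K ⊆ closedNbhd Γ G) : IsTube Γ K := by
  obtain ⟨⟨g, hg⟩, hconn⟩ := hG
  have hGK' : (G : Set V) ⊆ K := Finset.coe_subset.mpr hGK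
  have reachable_within_G : ∀ {x y : (K : Set V)}, (x : V) ∈ G → (y : V) ∈ G →
      (Γ.induce (K : Set V)).Reachable x y := fun {x y} hx hy =>
    (hconn.preconnected ⟨x, hx⟩ ⟨y, hy⟩).map (Γ.induceHomOfLE hGK').toHom
  have exists_reachable_mem_G : ∀ x : (K : Set V), ∃ y : (K : Set V), (y : V) ∈ G ∧
      (Γ.induce (K : Set V)).Reachable x y := by
    rintro ⟨x, hx⟩
    rcases (mem_closedNbhd Γ).mp (hK hx) with hxG | ⟨w, hw, hxw⟩
    · exact ⟨⟨x, hx⟩, hxG, .rfl⟩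
    · exact ⟨⟨w, hGK hw⟩, hw, SimpleGraph.Adj.reachable (G := Γ.induce (K : Set V)) hxw⟩
  have : Nonempty (K : Set V) := ⟨⟨g, hGK hg⟩⟩
  refine ⟨⟨g, hGK hg⟩, ⟨fun x y => ?_⟩⟩
  obtain ⟨x', hx'G, hxx'⟩ := exists_reachable_mem_G x
  obtain ⟨y', hy'G, hyy'⟩ := exists_reachable_mem_G y
  exact hxx'.trans ((reachable_within_G hx'G hy'G).trans hyy'.symm)

theorem exists_mem_sdiff_mem_closedNbhd {G H : Finset V}
    (hH : (Γ.induce (H : Set V)).Preconnected) (hG : G.Nonempty) (hGH : G ⊂ H) :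
    ∃ v ∈ H \ G, v ∈ closedNbhd Γ G := by
  obtain ⟨a, ha⟩ := hG
  obtain ⟨b, hbH, hbG⟩ := Finset.exists_of_ssubset hGH
  obtain ⟨p⟩ := hH ⟨a, hGH.subset ha⟩ ⟨b, hbH⟩
  obtain ⟨d, -, hd₁, hd₂⟩ := p.exists_boundary_dart {x | (x : V) ∈ G} ha hbG
  exact ⟨d.snd, Finset.mem_sdiff.mpr ⟨d.snd.2, hd₂⟩,
    (mem_closedNbhd Γ).mpr (.inr ⟨d.fst, hd₁, d.adj.symm⟩)⟩

theorem filter_isTube_between_eq_Icc {G H : Finset V} (hG : IsTube Γ G) :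
    Finset.univ.filter (fun K : Finset V => IsTube Γ K ∧ G ⊆ K ∧ K ⊆ H ∧ K ⊆ closedNbhd Γ G) =
      Finset.Icc G (H ∩ closedNbhd Γ G) := by
  ext K
  simp only [Finset.mem_filter, Finset.mem_univ, true_and, Finset.mem_Icc,
    Finset.subset_inter_iff]
  exact ⟨fun ⟨_, hGK, hK⟩ => ⟨hGK, hK⟩,
    fun ⟨hGK, hKH, hKN⟩ => ⟨hG.of_subset_closedNbhd hGK hKN, hGK, hKH, hKN⟩⟩

end Tubes

/-- For tubes `G ⊆ H` of a finite simple graph `Γ`, the sum of `(−1)^{|K|−|G|}` over all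
tubes `K` with `G ⊆ K ⊆ H` and `K ⊆ N[G]` equals `1` when `G = H` and `0` otherwise;
i.e. `μ_Γ(G,H) = (−1)^{|H|−|G|}` for `G ⊆ H ⊆ N[G]` (and `0` otherwise) is the Möbius
function of the poset of tubes of `Γ` ordered by inclusion. -/
theorem tube_moebius_sum
    {V : Type*} [Fintype V] [DecidableEq V] (Γ : SimpleGraph V) [DecidableRel Γ.Adj]
    (G H : Finset V) (hG : IsTube Γ G) (hH : IsTube Γ H) (hGH : G ⊆ H) :
    (∑ K ∈ Finset.univ.filter
        (fun K : Finset V => IsTube Γ K ∧ G ⊆ K ∧ K ⊆ H ∧ K ⊆ closedNbhd Γ G),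
        (-1 : ℤ) ^ (K.card - G.card)) =
      if G = H then 1 else 0 := by
  rw [filter_isTube_between_eq_Icc hG,
    Finset.sum_Icc_neg_one_pow_card_sub (Finset.subset_inter hGH (subset_closedNbhd Γ G))]
  refine if_congr ⟨fun hG_eq => ?_, fun hG_eq => ?_⟩ rfl rfl
  · by_contra hne
    obtain ⟨v, hv, hvN⟩ :=
      exists_mem_sdiff_mem_closedNbhd hH.2.preconnected hG.1 (hGH.ssubset_of_ne hne)
    rw [Finset.mem_sdiff] at hv
    exact hv.2 (hG_eq ▸ Finset.mem_inter.mpr ⟨hv.1, hvN⟩)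
  · subst hG_eq
    exact (Finset.inter_eq_left.mpr (subset_closedNbhd Γ G)).symm
end

section
/- Let Γ be a simple graph on a finite vertex type V and let d ≥ 1. For x ∈ Conf_Γ(ℝ^d) (where ℝ^d = Fin d → ℝ), define ψ_d(x) : V → V → Option (Fin d) by ψ_d(x) v w = some i iff Γ.Adj v w, i is the least index with x v i ≠ x w i, and x v i < x w i (and ψ_d(x) v w = none otherwise). Then ψ_d(x) is a d-weighted acyclic direction of Γ: for every edge {v,w} exactly one of ψ_d(x) v w and ψ_d(x) w v is defined, and the induced directed graph has no directed cycles. -/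
/-- A `d`-weighted acyclic direction of a simple graph `Γ`: each edge is directed and
labeled by a weight in `Fin d`, exactly one direction per edge, and there are no
directed cycles (the transitive closure of the directed-edge relation is irreflexive). -/
def IsWeightedAcyclicDirection {V : Type*} (Γ : SimpleGraph V) (d : ℕ)
    (D : V → V → Option (Fin d)) : Prop :=
  (∀ v w, D v w ≠ none → Γ.Adj v w) ∧
  (∀ v w, Γ.Adj v w → Xor' (D v w ≠ none) (D w v ≠ none)) ∧
  (∀ v, ¬ Relation.TransGen (fun a b => D a b ≠ none) v v)

/-- The weighted direction `ψ_d(x)` associated to a configuration `x : V → ℝ^d`: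
`ψ_d(x) v w = some i` iff `v, w` are adjacent, `i` is the least index at which
`x v` and `x w` differ, and `x v i < x w i`; otherwise `ψ_d(x) v w = none`. -/
noncomputable def psiDir {V : Type*} (Γ : SimpleGraph V) (d : ℕ) (x : V → Fin d → ℝ) :
    V → V → Option (Fin d) :=
  open scoped Classical in fun v w =>
    if h : Γ.Adj v w ∧ ∃ i : Fin d, x v i < x w i ∧ ∀ j : Fin d, j < i → x v j = x w j
    then some h.2.choose else none

theorem isWeightedAcyclicDirection_of_ne_none_iff {V α : Type*} [LinearOrder α]
    {Γ : SimpleGraph V} {d : ℕ} {D : V → V → Option (Fin d)} (f : V → α)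
    (hf : ∀ v w, Γ.Adj v w → f v ≠ f w)
    (hD : ∀ v w, D v w ≠ none ↔ Γ.Adj v w ∧ f v < f w) :
    IsWeightedAcyclicDirection Γ d D := by
  refine ⟨fun v w h => ((hD v w).1 h).1, fun v w hvw => ?_, fun v hv => ?_⟩
  · rcases (hf v w hvw).lt_or_gt with h | h
    · exact .inl ⟨(hD v w).2 ⟨hvw, h⟩, fun h' => h.not_gt ((hD w v).1 h').2⟩
    · exact .inr ⟨(hD w v).2 ⟨hvw.symm, h⟩, fun h' => h.not_gt ((hD v w).1 h').2⟩
  · have hlt : Relation.TransGen (· < ·) (f v) (f v) :=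
      Relation.TransGen.lift f (fun a b h => ((hD a b).1 h).2) v v hv
    rw [Relation.transGen_eq_self] at hlt
    exact lt_irrefl _ hlt

theorem psiDir_ne_none_iff {V : Type*} (Γ : SimpleGraph V) (d : ℕ) (x : V → Fin d → ℝ)
    (v w : V) : psiDir Γ d x v w ≠ none ↔ Γ.Adj v w ∧ toLex (x v) < toLex (x w) := by
  have hlex : toLex (x v) < toLex (x w) ↔
      ∃ i : Fin d, x v i < x w i ∧ ∀ j : Fin d, j < i → x v j = x w j :=
    -- `<` on `Lex (Fin d → ℝ)` is `Pi.Lex (· < ·) (· < ·)` by definition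
    exists_congr fun _ => and_comm
  rw [hlex]
  unfold psiDir
  split_ifs with h <;> simpa using h

theorem psiDir_isWeightedAcyclicDirection_general
    {V : Type*} (Γ : SimpleGraph V) (d : ℕ)
    (x : GraphConf Γ (Fin d → ℝ)) :
    IsWeightedAcyclicDirection Γ d (psiDir Γ d x.1) :=
  isWeightedAcyclicDirection_of_ne_none_iff (fun v => toLex (x.1 v))
    (fun v w hvw => by simpa using x.2 v w hvw) (psiDir_ne_none_iff Γ d x.1)

/-- For every configuration `x ∈ Conf_Γ(ℝ^d)`, the weighted direction `ψ_d(x)` is a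
`d`-weighted acyclic direction of `Γ`: each edge gets exactly one direction and the
resulting directed graph is acyclic. -/
theorem psiDir_isWeightedAcyclicDirection
    {V : Type*} [Fintype V] (Γ : SimpleGraph V) (d : ℕ) (hd : 1 ≤ d)
    (x : GraphConf Γ (Fin d → ℝ)) :
    IsWeightedAcyclicDirection Γ d (psiDir Γ d x.1) :=
  psiDir_isWeightedAcyclicDirection_general Γ d x
end

section
/- Let Γ be a simple graph on a finite vertex type V, let d ≥ 1, and let x₀ ∈ Conf_Γ(ℝ^d). Then the subspace {x ∈ Conf_Γ(ℝ^d) | ψ_d(x) ≤ ψ_d(x₀)} of Conf_Γ(ℝ^d) is contractible, where ≤ is the partial order on d-weighted acyclic directions. -/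
/-- The comparison relation on `d`-weighted directions: `α ≤ β` iff for each directed edge
`v →ᵉ w` of `α`, either `β` directs it `v →ᶠ w` with `e ≤ f`, or `β` directs it
`w →ᶠ v` with `e < f`. -/
def WadLE {V : Type*} {d : ℕ} (α β : V → V → Option (Fin d)) : Prop :=
  ∀ (v w : V) (e : Fin d), α v w = some e →
    (∃ f : Fin d, β v w = some f ∧ e ≤ f) ∨ (∃ f : Fin d, β w v = some f ∧ e < f)

namespace PsiAux

variable {V : Type*} {d : ℕ}

def Pred (x : V → Fin d → ℝ) (v w : V) (e : Fin d) : Prop :=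
  x v e < x w e ∧ ∀ j : Fin d, j < e → x v j = x w j

lemma pred_unique {x : V → Fin d → ℝ} {v w : V} {e e' : Fin d}
    (h : Pred x v w e) (h' : Pred x v w e') : e = e' := by
  rcases lt_trichotomy e e' with hlt | heq | hlt
  · exact absurd (h'.2 e hlt) (ne_of_lt h.1)
  · exact heq
  · exact absurd (h.2 e' hlt) (ne_of_lt h'.1)

lemma psiDir_eq_some_iff (Γ : SimpleGraph V) (x : V → Fin d → ℝ) (v w : V) (e : Fin d) :
    psiDir Γ d x v w = some e ↔ Γ.Adj v w ∧ Pred x v w e := by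
  unfold psiDir
  split_ifs with h
  · constructor
    · intro he
      have hc : Pred x v w h.2.choose := h.2.choose_spec
      have : h.2.choose = e := Option.some_injective _ he
      exact ⟨h.1, this ▸ hc⟩
    · rintro ⟨-, hp⟩
      exact congrArg some (pred_unique (h.2.choose_spec : Pred x v w _) hp)
  · constructor
    · intro h'; simp at h'
    · rintro ⟨hadj, hp⟩
      exact absurd ⟨hadj, e, hp⟩ h

lemma not_both {x : V → Fin d → ℝ} {v w : V} {e e' : Fin d}
    (h : Pred x v w e) (h' : Pred x w v e') : False := by
  rcases lt_trichotomy e e' with hlt | heq | hlt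
  · exact absurd (h'.2 e hlt).symm (ne_of_lt h.1)
  · exact lt_asymm h.1 (heq ▸ h'.1)
  · exact absurd (h.2 e' hlt).symm (ne_of_lt h'.1)

lemma exists_least (p : Fin d → Prop) (h : ∃ i, p i) :
    ∃ i, p i ∧ ∀ j, j < i → ¬ p j := by
  classical
  obtain ⟨i, hi⟩ := h
  have hq : ∃ n, ∃ hn : n < d, p ⟨n, hn⟩ := ⟨i.1, i.2, by simpa using hi⟩
  obtain ⟨hk, hpk⟩ := Nat.find_spec hq
  refine ⟨⟨Nat.find hq, hk⟩, hpk, ?_⟩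
  intro j hj hpj
  exact Nat.find_min hq (by exact_mod_cast hj) ⟨j.2, by simpa using hpj⟩

lemma wadle_refl {α : V → V → Option (Fin d)} : WadLE α α :=
  fun _ _ e h => Or.inl ⟨e, h, le_refl e⟩

lemma bound {Γ : SimpleGraph V} {x y : V → Fin d → ℝ}
    (hw : WadLE (psiDir Γ d x) (psiDir Γ d y)) {v w : V} {e : Fin d}
    (hx : psiDir Γ d x v w = some e) :
    (∀ j : Fin d, j < e → y v j = y w j) ∧ y v e ≤ y w e := by
  rcases hw v w e hx with ⟨f, hf, hef⟩ | ⟨f, hf, hef⟩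
  · obtain ⟨-, hp⟩ := (psiDir_eq_some_iff Γ y v w f).mp hf
    refine ⟨fun j hj => hp.2 j (lt_of_lt_of_le hj hef), ?_⟩
    rcases eq_or_lt_of_le hef with rfl | h
    · exact le_of_lt hp.1
    · exact le_of_eq (hp.2 e h)
  · obtain ⟨-, hp⟩ := (psiDir_eq_some_iff Γ y w v f).mp hf
    exact ⟨fun j hj => (hp.2 j (lt_trans hj hef)).symm, le_of_eq (hp.2 e hef).symm⟩

lemma mem_comb {Γ : SimpleGraph V} {x y : V → Fin d → ℝ}
    (hxc : ∀ v w : V, Γ.Adj v w → x v ≠ x w)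
    (hyc : ∀ v w : V, Γ.Adj v w → y v ≠ y w)
    (hw : WadLE (psiDir Γ d x) (psiDir Γ d y)) {t : ℝ} (ht0 : 0 ≤ t) (ht1 : t ≤ 1)
    (z : V → Fin d → ℝ) (hz : z = fun u i => (1 - t) * x u i + t * y u i) :
    (∀ v w : V, Γ.Adj v w → z v ≠ z w) ∧ WadLE (psiDir Γ d z) (psiDir Γ d y) := by
  rcases eq_or_lt_of_le ht1 with rfl | ht1'
  · have : z = y := by funext u i; simp [hz]
    subst this
    exact ⟨hyc, wadle_refl⟩
  · have h1t : (0:ℝ) < 1 - t := by linarith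
    -- transfer: edges of ψ(x) are edges of ψ(z)
    have htrans : ∀ v w e, psiDir Γ d x v w = some e → psiDir Γ d z v w = some e := by
      intro v w e he
      obtain ⟨hadj, hp⟩ := (psiDir_eq_some_iff Γ x v w e).mp he
      obtain ⟨hb1, hb2⟩ := bound hw he
      refine (psiDir_eq_some_iff Γ z v w e).mpr ⟨hadj, ?_, ?_⟩
      · subst hz
        exact add_lt_add_of_lt_of_le (mul_lt_mul_of_pos_left hp.1 h1t)
          (mul_le_mul_of_nonneg_left hb2 ht0)
      · intro j hj
        subst hz
        simp only
        rw [hp.2 j hj, hb1 j hj]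
    have orient : ∀ v w : V, Γ.Adj v w →
        ∃ e, psiDir Γ d x v w = some e ∨ psiDir Γ d x w v = some e := by
      intro v w hadj
      have hne : ∃ i, x v i ≠ x w i := Function.ne_iff.mp (hxc v w hadj)
      obtain ⟨i, hi, hmin⟩ := exists_least _ hne
      have heq : ∀ j, j < i → x v j = x w j := fun j hj => not_not.mp (hmin j hj)
      rcases hi.lt_or_gt with h | h
      · exact ⟨i, Or.inl ((psiDir_eq_some_iff Γ x v w i).mpr ⟨hadj, h, heq⟩)⟩
      · exact ⟨i, Or.inr ((psiDir_eq_some_iff Γ x w v i).mpr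
          ⟨hadj.symm, h, fun j hj => (heq j hj).symm⟩)⟩
    constructor
    · intro v w hadj hzz
      obtain ⟨e, he | he⟩ := orient v w hadj
      · have := ((psiDir_eq_some_iff Γ z v w e).mp (htrans v w e he)).2.1
        exact absurd (congrFun hzz e) (ne_of_lt this)
      · have := ((psiDir_eq_some_iff Γ z w v e).mp (htrans w v e he)).2.1
        exact absurd (congrFun hzz e).symm (ne_of_lt this)
    · intro v w e he
      have hadj := ((psiDir_eq_some_iff Γ z v w e).mp he).1
      obtain ⟨i, hi | hi⟩ := orient v w hadj
      · have hie : i = e := Option.some_injective _ ((htrans v w i hi).symm.trans he)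
        exact hw v w e (hie ▸ hi)
      · exact (PsiAux.not_both ((psiDir_eq_some_iff Γ z v w e).mp he).2
          ((psiDir_eq_some_iff Γ z w v i).mp (htrans w v i hi)).2).elim

end PsiAux

/-- For every basepoint `x₀ ∈ Conf_Γ(ℝ^d)`, the subspace
`{x ∈ Conf_Γ(ℝ^d) | ψ_d(x) ≤ ψ_d(x₀)}` is contractible. -/
theorem psi_downset_contractible
    {V : Type*} [Fintype V] (Γ : SimpleGraph V) (d : ℕ) (hd : 1 ≤ d)
    (x₀ : GraphConf Γ (Fin d → ℝ)) :
    ContractibleSpace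
      {x : GraphConf Γ (Fin d → ℝ) // WadLE (psiDir Γ d x.1) (psiDir Γ d x₀.1)} := by
  rw [contractible_iff_id_nullhomotopic]
  refine ⟨⟨x₀, PsiAux.wadle_refl⟩, ⟨?_⟩⟩
  have key : ∀ (t : unitInterval)
      (x : {x : GraphConf Γ (Fin d → ℝ) // WadLE (psiDir Γ d x.1) (psiDir Γ d x₀.1)}),
      (∀ v w : V, Γ.Adj v w →
        (fun u i => (1 - (t:ℝ)) * x.1.1 u i + (t:ℝ) * x₀.1 u i) v ≠
        (fun u i => (1 - (t:ℝ)) * x.1.1 u i + (t:ℝ) * x₀.1 u i) w) ∧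
      WadLE (psiDir Γ d (fun u i => (1 - (t:ℝ)) * x.1.1 u i + (t:ℝ) * x₀.1 u i))
        (psiDir Γ d x₀.1) :=
    fun t x => PsiAux.mem_comb x.1.2 x₀.2 x.2 t.2.1 t.2.2 _ rfl
  refine
    { toFun := fun p => ⟨⟨fun u i => (1 - (p.1:ℝ)) * p.2.1.1 u i + (p.1:ℝ) * x₀.1 u i,
        (key p.1 p.2).1⟩, (key p.1 p.2).2⟩
      continuous_toFun := ?_
      map_zero_left := ?_
      map_one_left := ?_ }
  · refine Continuous.subtype_mk (Continuous.subtype_mk ?_ _) _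
    refine continuous_pi fun v => continuous_pi fun i => ?_
    have h1 : Continuous fun p : unitInterval ×
        {x : GraphConf Γ (Fin d → ℝ) // WadLE (psiDir Γ d x.1) (psiDir Γ d x₀.1)} =>
        (p.1 : ℝ) := continuous_subtype_val.comp continuous_fst
    have h2 : Continuous fun p : unitInterval ×
        {x : GraphConf Γ (Fin d → ℝ) // WadLE (psiDir Γ d x.1) (psiDir Γ d x₀.1)} =>
        p.2.1.1 v i :=
      (continuous_apply i).comp ((continuous_apply v).comp
        (continuous_subtype_val.comp (continuous_subtype_val.comp continuous_snd)))
    exact ((continuous_const.sub h1).mul h2).add (h1.mul continuous_const)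
  · intro x
    ext v i
    simp
  · intro x
    ext v i
    simp
end
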